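/- For every finite simple graph G with at least one vertex, b*(G) ≤ m*(G) + 1. -/

import Mathlib

variable {V : Type*} {W : Type*}

/-- A proper coloring of `G` using colors `{1, …, k}`: colors lie in `{1,…,k}`,
adjacent vertices get different colors, and every color in `{1,…,k}` is used. -/
def IsProperKColoring (G : SimpleGraph V) (k : ℕ) (c : V → ℕ) : Prop :=
  (∀ v, c v ∈ Set.Icc 1 k) ∧
  (∀ u v, G.Adj u v → c u ≠ c v) ∧
  (∀ j ∈ Set.Icc 1 k, ∃ v, c v = j)

/-- `u` is a b-vertex: every color `j ∈ {1,…,k}` with `j ≠ c u` appears on a neighbor of `u`. -/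
def IsBVertex (G : SimpleGraph V) (k : ℕ) (c : V → ℕ) (u : V) : Prop :=
  ∀ j ∈ Set.Icc 1 k, j ≠ c u → ∃ w, G.Adj u w ∧ c w = j

/-- `u` is a nice vertex: it is a b-vertex and for every color `j ≠ c u` in `{1,…,k}`
it has a b-vertex neighbor of color `j`. -/
def IsNiceVertex (G : SimpleGraph V) (k : ℕ) (c : V → ℕ) (u : V) : Prop :=
  IsBVertex G k c u ∧
  ∀ j ∈ Set.Icc 1 k, j ≠ c u → ∃ w, G.Adj u w ∧ c w = j ∧ IsBVertex G k c w

/-- A Grundy coloring using `k` colors: proper, and every vertex of color `j` has a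
neighbor of each smaller color `i ≥ 1`. -/
def IsGrundyColoring (G : SimpleGraph V) (k : ℕ) (c : V → ℕ) : Prop :=
  IsProperKColoring G k c ∧
  ∀ i j : ℕ, 1 ≤ i → i < j → j ≤ k → ∀ v, c v = j → ∃ w, G.Adj v w ∧ c w = i

/-- A z-coloring: a Grundy coloring with a nice vertex of (top) color `k`. -/
def IsZColoring (G : SimpleGraph V) (k : ℕ) (c : V → ℕ) : Prop :=
  IsGrundyColoring G k c ∧ ∃ u, c u = k ∧ IsNiceVertex G k c u

/-- A b*-coloring: a proper coloring with a nice vertex of (top) color `k`. -/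
def IsBStarColoring (G : SimpleGraph V) (k : ℕ) (c : V → ℕ) : Prop :=
  IsProperKColoring G k c ∧ ∃ u, c u = k ∧ IsNiceVertex G k c u

/-- The z-chromatic number: largest `k` admitting a z-coloring with `k` colors. -/
noncomputable def zNum (G : SimpleGraph V) : ℕ :=
  sSup {k | ∃ c : V → ℕ, IsZColoring G k c}

/-- The b*-chromatic number: largest `k` admitting a b*-coloring with `k` colors. -/
noncomputable def bStar (G : SimpleGraph V) : ℕ :=
  sSup {k | ∃ c : V → ℕ, IsBStarColoring G k c}

/-- `m*(G)`: the largest `k` such that some vertex `u` has `k` distinct neighbors,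
each of degree at least `k`. -/
noncomputable def mStar (G : SimpleGraph V) : ℕ :=
  sSup {k | ∃ (u : V) (s : Finset V), (↑s : Set V) ⊆ G.neighborSet u ∧ s.card = k ∧
    ∀ v ∈ s, k ≤ (G.neighborSet v).ncard}

/-- The clique number `ω(G)`. -/
noncomputable def omegaNum (G : SimpleGraph V) : ℕ :=
  sSup {n | ∃ s : Finset V, G.IsNClique n s}

/-!
A nice vertex `u` of a b*-coloring with `k` colors has, for each of the `k - 1` colors other
than its own, a neighbor of that color which is a b-vertex. These `k - 1` neighbors are
distinct, and each of them, being a b-vertex, sees all `k - 1` other colors and so has degree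
at least `k - 1`. Hence `u` witnesses `k - 1 ≤ m*(G)`.
-/

theorem sub_one_le_ncard_of_forall_mem_Icc_ne [Finite V] {A : Set V} {c : V → ℕ} {k a : ℕ}
    (h : ∀ j ∈ Set.Icc 1 k, j ≠ a → ∃ w ∈ A, c w = j) : k - 1 ≤ A.ncard := by
  have hsub : (((Finset.Icc 1 k).erase a : Finset ℕ) : Set ℕ) ⊆ c '' A := by
    intro j hj
    rw [Finset.coe_erase, Finset.coe_Icc] at hj
    exact h j hj.1 hj.2
  calc k - 1 = (Finset.Icc 1 k).card - 1 := by rw [Nat.card_Icc, Nat.add_sub_cancel]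
    _ ≤ ((Finset.Icc 1 k).erase a).card := Finset.pred_card_le_card_erase
    _ = (((Finset.Icc 1 k).erase a : Finset ℕ) : Set ℕ).ncard := (Set.ncard_coe_finset _).symm
    _ ≤ (c '' A).ncard := Set.ncard_le_ncard hsub
    _ ≤ A.ncard := Set.ncard_image_le

theorem le_mStar_of_le_ncard [Finite V] {G : SimpleGraph V} {u : V} {A : Set V} {m : ℕ}
    (hA : A ⊆ G.neighborSet u) (hm : m ≤ A.ncard)
    (hdeg : ∀ v ∈ A, m ≤ (G.neighborSet v).ncard) : m ≤ mStar G := by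
  have hfin := Set.toFinite A
  rw [Set.ncard_eq_toFinset_card A hfin] at hm
  obtain ⟨s, hsA, rfl⟩ := Finset.exists_subset_card_eq hm
  have hsA : (s : Set V) ⊆ A := by simpa using hsA
  have hbdd : BddAbove {k | ∃ (u : V) (s : Finset V), (↑s : Set V) ⊆ G.neighborSet u ∧
      s.card = k ∧ ∀ v ∈ s, k ≤ (G.neighborSet v).ncard} := by
    refine ⟨Nat.card V, ?_⟩
    rintro k ⟨-, t, -, rfl, -⟩
    exact Set.ncard_coe_finset t ▸ Set.ncard_le_card _
  exact le_csSup hbdd ⟨u, s, hsA.trans hA, rfl, fun v hv => hdeg v (hsA hv)⟩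

theorem IsBVertex.sub_one_le_ncard_neighborSet [Finite V] {G : SimpleGraph V} {k : ℕ}
    {c : V → ℕ} {w : V} (hw : IsBVertex G k c w) : k - 1 ≤ (G.neighborSet w).ncard :=
  sub_one_le_ncard_of_forall_mem_Icc_ne hw

theorem IsNiceVertex.sub_one_le_mStar [Finite V] {G : SimpleGraph V} {k : ℕ} {c : V → ℕ}
    {u : V} (hu : IsNiceVertex G k c u) : k - 1 ≤ mStar G :=
  le_mStar_of_le_ncard (A := {w | G.Adj u w ∧ IsBVertex G k c w}) (fun _ hw => hw.1)
    (sub_one_le_ncard_of_forall_mem_Icc_ne fun j hj hne =>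
      let ⟨w, hadj, hcw, hw⟩ := hu.2 j hj hne; ⟨w, ⟨hadj, hw⟩, hcw⟩)
    fun _ hw => hw.2.sub_one_le_ncard_neighborSet

theorem bStar_le_mStar_add_one [Fintype V] (G : SimpleGraph V) :
    bStar G ≤ mStar G + 1 := by
  refine csSup_le' ?_
  rintro k ⟨c, -, u, -, hu⟩
  have := hu.sub_one_le_mStar
  omega
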